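/- arXiv:2112.15410 — 5 statements merged into one kernel-verified Lean document; each statement's English description precedes it below -/
import Mathlib

section
/- Let a, b, c ≥ 0 be real numbers with c² ≥ a² + μb² for some μ ≥ 1, and suppose a² ≥ l·b² for some l ≥ 1. Then for all α ≥ 2, c^α ≥ a^α + ((μ+l)^{α/2} - l^{α/2})·b^α. -/
/-!
Put `t = α / 2`, so that `x ^ α = (x ^ 2) ^ t`. Since `x ↦ x ^ t` is convex on `[0, ∞)`, its
increments `(x + μ b²) ^ t - x ^ t` are nondecreasing in `x`; comparing them at `l b² ≤ a²` gives
`((μ + l) ^ t - l ^ t) b ^ α ≤ (a² + μ b²) ^ t - a ^ α`, and `a² + μ b² ≤ c²` finishes.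
-/

open Real Set

/- Both `x + d` and `y` lie on the segment from `x` to `y + d`, at mirror-image positions, so
adding the two convexity inequalities gives `f (x + d) + f y ≤ f x + f (y + d)`. -/
theorem ConvexOn.map_add_sub_le_map_add_sub {𝕜 : Type*} [Field 𝕜] [LinearOrder 𝕜]
    [IsStrictOrderedRing 𝕜] {s : Set 𝕜} {f : 𝕜 → 𝕜} (hf : ConvexOn 𝕜 s f) {x y d : 𝕜}
    (hx : x ∈ s) (hyd : y + d ∈ s) (hxy : x ≤ y) (hd : 0 ≤ d) :
    f (x + d) - f x ≤ f (y + d) - f y := by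
  rcases (add_le_add hxy hd).eq_or_lt with hxyd | hlen
  · obtain rfl : d = 0 := by linarith
    obtain rfl : x = y := by linarith
    simp
  rw [add_zero, ← sub_pos] at hlen
  set θ := d / (y + d - x)
  have hθ : 0 ≤ θ := by positivity
  have hθ' : 0 ≤ 1 - θ := by
    rw [sub_nonneg, div_le_one hlen]; linarith
  have hleft := hf.2 hx hyd hθ' hθ (by ring)
  have hright := hf.2 hx hyd hθ hθ' (by ring)
  have hθL : θ * (y + d - x) = d := div_mul_cancel₀ d hlen.ne'
  have hxd : (1 - θ) * x + θ * (y + d) = x + d := by linear_combination hθL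
  have hy : θ * x + (1 - θ) * (y + d) = y := by linear_combination -hθL
  simp only [smul_eq_mul, hxd, hy] at hleft hright
  linarith

theorem stmt_3 (a b c μ l α : ℝ) (ha : 0 ≤ a) (hb : 0 ≤ b) (hc : 0 ≤ c)
    (hμ : 1 ≤ μ) (hl : 1 ≤ l)
    (h1 : a ^ (2:ℝ) + μ * b ^ (2:ℝ) ≤ c ^ (2:ℝ))
    (h2 : l * b ^ (2:ℝ) ≤ a ^ (2:ℝ))
    (hα : 2 ≤ α) :
    c ^ α ≥ a ^ α + ((μ + l) ^ (α / 2) - l ^ (α / 2)) * b ^ α := by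
  have ht : 1 ≤ α / 2 := by linarith
  have hsq : ∀ x : ℝ, 0 ≤ x → x ^ α = (x ^ (2:ℝ)) ^ (α / 2) := fun x hx => by
    rw [← rpow_mul hx]; ring_nf
  have hB : 0 ≤ b ^ (2:ℝ) := rpow_nonneg hb 2
  have hincr := (convexOn_rpow ht).map_add_sub_le_map_add_sub (mem_Ici.2 (by positivity))
    (mem_Ici.2 (by positivity)) h2 (by positivity : 0 ≤ μ * b ^ (2:ℝ))
  have hmono : (a ^ (2:ℝ) + μ * b ^ (2:ℝ)) ^ (α / 2) ≤ (c ^ (2:ℝ)) ^ (α / 2) :=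
    rpow_le_rpow (by positivity) h1 (by positivity)
  rw [← add_mul, add_comm l, mul_rpow (by positivity) hB, mul_rpow (by positivity) hB] at hincr
  rw [hsq a ha, hsq b hb, hsq c hc]
  linarith
end

section
/- Let a, b ≥ 0 with a² ≥ l·b² for l ≥ 1, let μ ≥ 1, and α ≥ 2. Then (a² + μb²)^{α/2} ≥ a^α + ((μ+l)^{α/2} - l^{α/2})·b^α. -/
/-! Since `t ↦ t ^ (α / 2)` is convex on `[0, ∞)`, its increments over an interval of fixed
length `μ b²` grow with the left endpoint; comparing the endpoints `l b² ≤ a²` gives the claim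
after the substitutions `(b²) ^ (α / 2) = b ^ α` and `(a²) ^ (α / 2) = a ^ α`. -/

open Set

theorem ConvexOn.map_add_add_map_le {𝕜 : Type*} [Field 𝕜] [LinearOrder 𝕜] [IsStrictOrderedRing 𝕜]
    {s : Set 𝕜} {f : 𝕜 → 𝕜} (hf : ConvexOn 𝕜 s f) {x y c : 𝕜} (hx : x ∈ s) (hyc : y + c ∈ s)
    (hxy : x ≤ y) (hc : 0 ≤ c) : f (x + c) + f y ≤ f x + f (y + c) := by
  obtain hd | hd := (show 0 ≤ y + c - x by linarith).eq_or_lt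
  · obtain rfl : y = x := by linarith
    obtain rfl : c = 0 := by linarith
    simp
  -- `x + c` and `y` are the two convex combinations of `x` and `y + c` with swapped weights
  have hw₁ : 0 ≤ (y - x) / (y + c - x) := div_nonneg (by linarith) hd.le
  have hw₂ : 0 ≤ c / (y + c - x) := div_nonneg hc hd.le
  have hsum : (y - x) / (y + c - x) + c / (y + c - x) = 1 := by field_simp; ring
  have h₁ := hf.2 hx hyc hw₁ hw₂ hsum
  have h₂ := hf.2 hx hyc hw₂ hw₁ (by rw [add_comm, hsum])
  simp only [smul_eq_mul] at h₁ h₂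
  have e₁ : (y - x) / (y + c - x) * x + c / (y + c - x) * (y + c) = x + c := by field_simp; ring
  have e₂ : c / (y + c - x) * x + (y - x) / (y + c - x) * (y + c) = y := by field_simp; ring
  rw [e₁] at h₁
  rw [e₂] at h₂
  linear_combination h₁ + h₂ + (f x + f (y + c)) * hsum

theorem Real.rpow_two_rpow_div_two {x : ℝ} (hx : 0 ≤ x) (α : ℝ) : (x ^ (2:ℝ)) ^ (α / 2) = x ^ α := by
  rw [← Real.rpow_mul hx, mul_div_cancel₀ α two_ne_zero]

theorem stmt_4 (a b μ l α : ℝ) (ha : 0 ≤ a) (hb : 0 ≤ b)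
    (hμ : 1 ≤ μ) (hl : 1 ≤ l)
    (h : l * b ^ (2:ℝ) ≤ a ^ (2:ℝ))
    (hα : 2 ≤ α) :
    (a ^ (2:ℝ) + μ * b ^ (2:ℝ)) ^ (α / 2) ≥
      a ^ α + ((μ + l) ^ (α / 2) - l ^ (α / 2)) * b ^ α := by
  have hb2 : 0 ≤ b ^ (2:ℝ) := Real.rpow_nonneg hb 2
  have hlb : 0 ≤ l * b ^ (2:ℝ) := mul_nonneg (by linarith) hb2
  have hμb : 0 ≤ μ * b ^ (2:ℝ) := mul_nonneg (by linarith) hb2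
  have key := (convexOn_rpow (p := α / 2) (by linarith)).map_add_add_map_le
    (mem_Ici.2 hlb) (mem_Ici.2 (by linarith)) h hμb
  rw [← add_mul, add_comm l, Real.mul_rpow (by linarith) hb2, Real.mul_rpow (by linarith) hb2,
    Real.rpow_two_rpow_div_two hb, Real.rpow_two_rpow_div_two ha] at key
  linear_combination key
end

section
/- Let N ≥ 2 and let c₀, c₁, ..., c_{N-1} ≥ 0 be real numbers. Suppose there are reals μᵢ ≥ 1, lᵢ ≥ 1 and partial 'tail' values d₁, ..., d_{N-1} ≥ 0 with d_{N-1} = c_{N-1}, and for each 1 ≤ i ≤ N-2: cᵢ² ≥ lᵢ·dᵢ₊₁² and dᵢ² ≥ cᵢ² + μᵢ·dᵢ₊₁². Then for all α ≥ 2, d₁^α ≥ c₁^α + K₁·c₂^α + K₁K₂·c₃^α + ... + K₁⋯K_{N-2}·c_{N-1}^α, where Kᵣ = (μᵣ+lᵣ)^{α/2} - lᵣ^{α/2}. -/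
/-!
Write `t = α / 2 ≥ 1` and `K i = (μ i + l i) ^ t - l i ^ t`. Because `x ↦ x ^ t` is convex, its
increments over an interval of fixed length grow with the base point; comparing the increments
over `[l y, x]` and `[(l + μ) y, x + μ y]` gives `x ^ t + K y ^ t ≤ (x + μ y) ^ t` whenever
`l y ≤ x`. Applied with `x = cᵢ²`, `y = dᵢ₊₁²` this is the one-step bound
`cᵢ ^ α + Kᵢ dᵢ₊₁ ^ α ≤ dᵢ ^ α`, and unrolling it from `i = 1` down to `d_{N-1} = c_{N-1}`
yields the theorem.
-/

open Finset

theorem ConvexOn.map_add_sub_map_le {𝕜 : Type*} [Field 𝕜] [LinearOrder 𝕜] [IsStrictOrderedRing 𝕜]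
    {s : Set 𝕜} {f : 𝕜 → 𝕜} (hf : ConvexOn 𝕜 s f) {x y z : 𝕜} (hx : x ∈ s) (hyz : y + z ∈ s)
    (hxy : x ≤ y) (hz : 0 ≤ z) : f (x + z) - f x ≤ f (y + z) - f y := by
  rcases hz.eq_or_lt with rfl | hz
  · simp
  rcases hxy.eq_or_lt with rfl | hxy
  · exact le_rfl
  have hleft := hf.secant_mono_aux1 hx hyz (by linarith : x < x + z) (by linarith)
  have hright := hf.secant_mono_aux1 hx hyz hxy (by linarith)
  -- the two chord inequalities add up to `y + z - x` times the claim
  refine le_of_mul_le_mul_left ?_ (by linarith : 0 < y + z - x)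
  linear_combination hleft + hright

theorem Real.rpow_add_sub_rpow_mul_rpow_le {t x y l μ : ℝ} (ht : 1 ≤ t) (hy : 0 ≤ y)
    (hl : 0 ≤ l) (hμ : 0 ≤ μ) (hlx : l * y ≤ x) :
    x ^ t + ((μ + l) ^ t - l ^ t) * y ^ t ≤ (x + μ * y) ^ t := by
  have hly : 0 ≤ l * y := mul_nonneg hl hy
  have key := (convexOn_rpow ht).map_add_sub_map_le (z := x - l * y) hly
    (Set.mem_Ici.2 (by nlinarith)) (by nlinarith : l * y ≤ (μ + l) * y) (by linarith)
  rw [Real.mul_rpow hl hy, Real.mul_rpow (by linarith) hy] at key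
  rw [show l * y + (x - l * y) = x by ring, show (μ + l) * y + (x - l * y) = x + μ * y by ring]
    at key
  linarith

theorem rpow_add_mul_rpow_le_of_sq {α c d d' l μ : ℝ} (hα : 2 ≤ α) (hc : 0 ≤ c) (hd : 0 ≤ d)
    (hd' : 0 ≤ d') (hl : 0 ≤ l) (hμ : 0 ≤ μ) (h1 : l * d' ^ (2:ℝ) ≤ c ^ (2:ℝ))
    (h2 : c ^ (2:ℝ) + μ * d' ^ (2:ℝ) ≤ d ^ (2:ℝ)) :
    c ^ α + ((μ + l) ^ (α / 2) - l ^ (α / 2)) * d' ^ α ≤ d ^ α := by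
  have hsq : ∀ {x : ℝ}, 0 ≤ x → x ^ α = (x ^ (2:ℝ)) ^ (α / 2) := fun hx => by
    rw [← Real.rpow_mul hx, mul_div_cancel₀ α two_ne_zero]
  rw [hsq hc, hsq hd, hsq hd']
  calc _ ≤ (c ^ (2:ℝ) + μ * d' ^ (2:ℝ)) ^ (α / 2) :=
        Real.rpow_add_sub_rpow_mul_rpow_le (by linarith) (by positivity) hl hμ h1
    _ ≤ (d ^ (2:ℝ)) ^ (α / 2) := Real.rpow_le_rpow (by positivity) h2 (by linarith)

theorem sum_prod_Ico_mul_le_of_add_mul_le {R : Type*} [CommSemiring R] [PartialOrder R]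
    [IsOrderedRing R] {a b K : ℕ → R} {m n : ℕ} (hmn : m ≤ n)
    (hK : ∀ i, m ≤ i → i < n → 0 ≤ K i)
    (hstep : ∀ i, m ≤ i → i < n → b i + K i * a (i + 1) ≤ a i) (hlast : b n ≤ a n) :
    ∑ j ∈ Icc m n, (∏ r ∈ Ico m j, K r) * b j ≤ a m := by
  obtain ⟨k, rfl⟩ := Nat.exists_eq_add_of_le hmn
  induction k generalizing m with
  | zero => simpa using hlast
  | succ k ih =>
    have htail : ∑ j ∈ Icc (m + 1) (m + (k + 1)), (∏ r ∈ Ico m j, K r) * b j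
        = K m * ∑ j ∈ Icc (m + 1) (m + 1 + k), (∏ r ∈ Ico (m + 1) j, K r) * b j := by
      rw [mul_sum, show m + (k + 1) = m + 1 + k by ring]
      refine sum_congr rfl fun j hj => ?_
      rw [prod_eq_prod_Ico_succ_bot (by rw [mem_Icc] at hj; omega), mul_assoc]
    have hrest := ih (m := m + 1) (by omega) (fun i hi hi' => hK i (by omega) (by omega))
      (fun i hi hi' => hstep i (by omega) (by omega))
      (by rwa [show m + 1 + k = m + (k + 1) by ring])
    rw [Icc_eq_cons_Ioc (by omega), sum_cons, ← Icc_add_one_left_eq_Ioc, htail, Ico_self,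
      prod_empty, one_mul]
    calc b m + K m * _ ≤ b m + K m * a (m + 1) :=
          add_le_add le_rfl (mul_le_mul_of_nonneg_left hrest (hK m le_rfl (by omega)))
      _ ≤ a m := hstep m le_rfl (by omega)

theorem stmt_7 (N : ℕ) (hN : 2 ≤ N) (c d μ l : ℕ → ℝ)
    (hc : ∀ i, 1 ≤ i → i ≤ N - 1 → 0 ≤ c i)
    (hd : ∀ i, 1 ≤ i → i ≤ N - 1 → 0 ≤ d i)
    (hμ : ∀ i, 1 ≤ i → i ≤ N - 2 → 1 ≤ μ i)
    (hl : ∀ i, 1 ≤ i → i ≤ N - 2 → 1 ≤ l i)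
    (hlast : d (N - 1) = c (N - 1))
    (h1 : ∀ i, 1 ≤ i → i ≤ N - 2 → l i * d (i + 1) ^ (2:ℝ) ≤ c i ^ (2:ℝ))
    (h2 : ∀ i, 1 ≤ i → i ≤ N - 2 →
      c i ^ (2:ℝ) + μ i * d (i + 1) ^ (2:ℝ) ≤ d i ^ (2:ℝ))
    (α : ℝ) (hα : 2 ≤ α) :
    d 1 ^ α ≥ ∑ i ∈ Finset.Icc 1 (N - 1),
      (∏ r ∈ Finset.Icc 1 (i - 1),
        ((μ r + l r) ^ (α / 2) - (l r) ^ (α / 2))) * c i ^ α := by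
  have hK : ∀ i, 1 ≤ i → i < N - 1 → 0 ≤ (μ i + l i) ^ (α / 2) - l i ^ (α / 2) := fun i hi hi' =>
    sub_nonneg.2 <| Real.rpow_le_rpow (by linarith [hl i hi (by omega)])
      (by linarith [hμ i hi (by omega)]) (by linarith)
  have hstep : ∀ i, 1 ≤ i → i < N - 1 →
      c i ^ α + ((μ i + l i) ^ (α / 2) - l i ^ (α / 2)) * d (i + 1) ^ α ≤ d i ^ α :=
    fun i hi hi' => rpow_add_mul_rpow_le_of_sq hα (hc i hi (by omega)) (hd i hi (by omega))
      (hd (i + 1) (by omega) (by omega)) (by linarith [hl i hi (by omega)])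
      (by linarith [hμ i hi (by omega)]) (h1 i hi (by omega)) (h2 i hi (by omega))
  have hsum := sum_prod_Ico_mul_le_of_add_mul_le (a := fun i => d i ^ α) (b := fun i => c i ^ α)
    (by omega) hK hstep (by rw [hlast])
  refine le_of_eq_of_le (sum_congr rfl fun i hi => ?_) hsum
  rw [Icc_sub_one_right_eq_Ico_of_not_isMin (not_isMin_of_lt (mem_Icc.1 hi).1)]
end

section
/- Let a, b, c ≥ 0 be real numbers with c^{√2} ≥ a^{√2} + μ·b^{√2} for some μ ≥ 1, and a^{√2} ≥ l·b^{√2} for some l ≥ 1. Then for all α ≥ √2, c^α ≥ a^α + ((μ+l)^{α/√2} - l^{α/√2})·b^α. -/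
/-!
Put `t = α / √2 ≥ 1` and `A = a^√2`, `B = b^√2`, `C = c^√2`, so that `x^α = (x^√2)^t`.
Since `x ↦ x^t` is convex on `[0, ∞)`, its increments `(x + d)^t - x^t` grow with `x`; applied at
`l B ≤ A` with step `μ B` this gives `((μ + l)^t - l^t) B^t ≤ (A + μ B)^t - A^t ≤ C^t - A^t`.
-/

open Set

theorem ConvexOn.sub_le_sub_of_le {s : Set ℝ} {f : ℝ → ℝ} (hf : ConvexOn ℝ s f) {x y d : ℝ}
    (hx : x ∈ s) (hyd : y + d ∈ s) (hxy : x ≤ y) (hd : 0 ≤ d) :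
    f (x + d) - f x ≤ f (y + d) - f y := by
  rcases hd.eq_or_lt with rfl | hd
  · simp
  rcases hxy.eq_or_lt with rfl | hxy
  · rfl
  have hxd : x + d ∈ s := hf.1.ordConnected.out hx hyd ⟨by linarith, by linarith⟩
  have hy : y ∈ s := hf.1.ordConnected.out hx hyd ⟨hxy.le, by linarith⟩
  -- slope on `[x, x + d]` ≤ slope on `[x, y + d]` ≤ slope on `[y, y + d]`
  have left : (f (x + d) - f x) / d ≤ (f (y + d) - f x) / (y + d - x) := by
    simpa using hf.secant_mono hx hxd hyd (by linarith) (by linarith) (by linarith)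
  have right : (f (y + d) - f x) / (y + d - x) ≤ (f (y + d) - f y) / d := by
    have h := hf.secant_mono hyd hx hy (by linarith) (by linarith) hxy.le
    rwa [← neg_div_neg_eq, neg_sub, neg_sub, ← neg_div_neg_eq (f y - _), neg_sub, neg_sub,
      add_sub_cancel_left] at h
  exact (div_le_div_iff_of_pos_right hd).1 (left.trans right)

theorem rpow_add_mul_sub_rpow_le {A B C μ l t : ℝ} (hA : 0 ≤ A) (hB : 0 ≤ B) (hμ : 0 ≤ μ)
    (hl : 0 ≤ l) (ht : 1 ≤ t) (hAC : A + μ * B ≤ C) (hlA : l * B ≤ A) :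
    A ^ t + ((μ + l) ^ t - l ^ t) * B ^ t ≤ C ^ t := by
  have hincr := (convexOn_rpow ht).sub_le_sub_of_le (mem_Ici.2 (mul_nonneg hl hB))
    (mem_Ici.2 (add_nonneg hA (mul_nonneg hμ hB))) hlA (mul_nonneg hμ hB)
  have hsplit : ((μ + l) ^ t - l ^ t) * B ^ t = (l * B + μ * B) ^ t - (l * B) ^ t := by
    rw [← add_mul, add_comm l, Real.mul_rpow (by positivity) hB, Real.mul_rpow hl hB]
    ring
  have hmono : (A + μ * B) ^ t ≤ C ^ t := Real.rpow_le_rpow (by positivity) hAC (by linarith)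
  linarith

theorem stmt_8 (a b c μ l α : ℝ) (ha : 0 ≤ a) (hb : 0 ≤ b) (hc : 0 ≤ c)
    (hμ : 1 ≤ μ) (hl : 1 ≤ l)
    (h1 : a ^ (Real.sqrt 2) + μ * b ^ (Real.sqrt 2) ≤ c ^ (Real.sqrt 2))
    (h2 : l * b ^ (Real.sqrt 2) ≤ a ^ (Real.sqrt 2))
    (hα : Real.sqrt 2 ≤ α) :
    c ^ α ≥ a ^ α +
      ((μ + l) ^ (α / Real.sqrt 2) - l ^ (α / Real.sqrt 2)) * b ^ α := by
  have hsqrt2 : 0 < Real.sqrt 2 := by positivity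
  have hpow {x : ℝ} (hx : 0 ≤ x) : x ^ α = (x ^ Real.sqrt 2) ^ (α / Real.sqrt 2) := by
    rw [← Real.rpow_mul hx, mul_div_cancel₀ _ hsqrt2.ne']
  rw [hpow ha, hpow hb, hpow hc]
  exact rpow_add_mul_sub_rpow_le (by positivity) (by positivity) (by linarith) (by linarith)
    ((one_le_div hsqrt2).2 hα) h1 h2
end

section
/- Let a, b, c ≥ 0 be real numbers with c ≤ a + μ·b for some 0 < μ ≤ 1, and a ≥ l·b for some l ≥ 1. Then for all real 0 ≤ α ≤ 1, c^α ≤ a^α + ((μ+l)^α - l^α)·b^α. -/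
theorem ConcaveOn.map_add_sub_map_le {s : Set ℝ} {g : ℝ → ℝ} (hg : ConcaveOn ℝ s g)
    {u v d : ℝ} (hu : u ∈ s) (hvd : v + d ∈ s) (huv : u ≤ v) (hd : 0 ≤ d) :
    g (v + d) - g v ≤ g (u + d) - g u := by
  rcases (add_le_add huv hd).eq_or_lt with hdeg | hlt
  · obtain rfl : u = v := by linarith
    obtain rfl : d = 0 := by linarith
    simp
  -- `v` and `u + d` are the two mirror-image convex combinations of `u` and `v + d`.
  set θ := d / (v + d - u)
  have hθd : θ * (v + d - u) = d := div_mul_cancel₀ _ (by linarith)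
  have hθ0 : 0 ≤ θ := div_nonneg hd (by linarith)
  have hθ1 : θ ≤ 1 := (div_le_one (by linarith)).2 (by linarith)
  have hv := hg.2 hu hvd hθ0 (sub_nonneg.2 hθ1) (add_sub_cancel θ 1)
  have hud := hg.2 hu hvd (sub_nonneg.2 hθ1) hθ0 (sub_add_cancel 1 θ)
  simp only [smul_eq_mul] at hv hud
  rw [show θ * u + (1 - θ) * (v + d) = v by linarith] at hv
  rw [show (1 - θ) * u + θ * (v + d) = u + d by linarith] at hud
  linarith

theorem stmt_10_general (a b c μ l α : ℝ) (ha : 0 ≤ a) (hb : 0 ≤ b) (hc : 0 ≤ c)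
    (hμ0 : 0 < μ) (hl : 1 ≤ l)
    (h1 : c ≤ a + μ * b) (h2 : l * b ≤ a)
    (hα0 : 0 ≤ α) (hα1 : α ≤ 1) :
    c ^ α ≤ a ^ α + ((μ + l) ^ α - l ^ α) * b ^ α := by
  have hl0 : 0 ≤ l := by linarith
  have hincr : (a + μ * b) ^ α - a ^ α ≤ (l * b + μ * b) ^ α - (l * b) ^ α :=
    (Real.concaveOn_rpow hα0 hα1).map_add_sub_map_le (Set.mem_Ici.2 (by positivity))
      (Set.mem_Ici.2 (by positivity)) h2 (by positivity)
  have hsplit : (l * b + μ * b) ^ α - (l * b) ^ α = ((μ + l) ^ α - l ^ α) * b ^ α := by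
    rw [← add_mul, add_comm l, Real.mul_rpow (by positivity) hb, Real.mul_rpow hl0 hb]
    ring
  calc c ^ α ≤ (a + μ * b) ^ α := Real.rpow_le_rpow hc h1 hα0
    _ ≤ a ^ α + ((μ + l) ^ α - l ^ α) * b ^ α := by linarith

theorem stmt_10 (a b c μ l α : ℝ) (ha : 0 ≤ a) (hb : 0 ≤ b) (hc : 0 ≤ c)
    (hμ0 : 0 < μ) (hμ1 : μ ≤ 1) (hl : 1 ≤ l)
    (h1 : c ≤ a + μ * b) (h2 : l * b ≤ a)
    (hα0 : 0 ≤ α) (hα1 : α ≤ 1) :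
    c ^ α ≤ a ^ α + ((μ + l) ^ α - l ^ α) * b ^ α :=
  stmt_10_general a b c μ l α ha hb hc hμ0 hl h1 h2 hα0 hα1
end
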